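/- Let A be an n×n invertible real matrix with no zero rows, and let R_A = R_n ⋯ R_1 be the product of the Householder reflections R_i = I_n - 2 A_i A_i^T / ‖A_i‖² generated by the rows of A. Then 1 is not an eigenvalue of R_A. -/
import Mathlib


open Matrix

/-- The Householder reflection determined by a (nonzero) vector `a`. -/
noncomputable def reflOf {n : ℕ} (a : Fin n → ℝ) : Matrix (Fin n) (Fin n) ℝ :=
  1 - (2 / (∑ j, a j ^ 2)) • Matrix.vecMulVec a a

/-- The product `R_m ⋯ R_2 R_1` of the Householder reflections of the rows of `A`. -/
noncomputable def reflProd {m n : ℕ} (A : Matrix (Fin m) (Fin n) ℝ) :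
    Matrix (Fin n) (Fin n) ℝ :=
  (((List.finRange m).map (fun i => reflOf (A i))).reverse).prod

lemma reflOf_mulVec {n : ℕ} (a x : Fin n → ℝ) :
    (reflOf a).mulVec x = x - ((2 / (∑ j, a j ^ 2)) * (∑ j, a j * x j)) • a := by
  unfold reflOf
  rw [Matrix.sub_mulVec, Matrix.one_mulVec, Matrix.smul_mulVec]
  have h : (Matrix.vecMulVec a a).mulVec x = (∑ j, a j * x j) • a := by
    ext i
    simp only [Matrix.mulVec, Matrix.vecMulVec_apply, dotProduct, Pi.smul_apply, smul_eq_mul]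
    rw [Finset.sum_mul]
    exact Finset.sum_congr rfl fun j _ => by ring
  rw [h, smul_smul]

/-- if `A` is invertible with nonzero rows, then `1` is not an
eigenvalue of `R_A`. -/
theorem one_not_eigenvalue (n : ℕ) (A : Matrix (Fin n) (Fin n) ℝ)
    (hA : ∀ i, A i ≠ 0) (hinv : IsUnit A.det) :
    ∀ v : Fin n → ℝ, (reflProd A).mulVec v = v → v = 0 := by
  intro v hv
  set w : ℕ → (Fin n → ℝ) := fun k =>
    (((((List.finRange n).take k)).map (fun i => reflOf (A i))).reverse).prod.mulVec v with hw
  have hw0 : w 0 = v := by simp [hw, Matrix.one_mulVec]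
  have hwn : w n = v := by
    have ht : (List.finRange n).take n = List.finRange n := by
      rw [List.take_of_length_le]; simp
    rw [hw]; simp only [ht]; exact hv
  have hstep : ∀ k (h : k < n), w (k + 1) =
      w k - ((2 / (∑ j, A ⟨k, h⟩ j ^ 2)) * (∑ j, A ⟨k, h⟩ j * w k j)) • A ⟨k, h⟩ := by
    intro k h
    have htake : (List.finRange n).take (k+1) = (List.finRange n).take k ++ [⟨k, h⟩] := by
      rw [List.take_succ]
      simp [List.getElem?_eq_getElem, h]
    rw [hw]
    simp only [htake, List.map_append, List.reverse_append, List.map_cons, List.map_nil,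
      List.reverse_cons, List.reverse_nil, List.nil_append, List.singleton_append,
      List.prod_cons]
    rw [← Matrix.mulVec_mulVec, reflOf_mulVec]
  set c : Fin n → ℝ := fun i =>
    (2 / (∑ j, A i j ^ 2)) * (∑ j, A i j * w i j) with hc
  have hstep' : ∀ k (h : k < n), w (k + 1) = w k - c ⟨k, h⟩ • A ⟨k, h⟩ := by
    intro k h; rw [hstep k h, hc]
  have key : ∀ i : Fin n, c i • A i = w i.val - w (i.val + 1) := by
    intro i
    rw [hstep' i.val i.isLt]
    simp [Fin.eta]
  have htel : ∑ i : Fin n, c i • A i = 0 := by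
    have h1 : ∑ k ∈ Finset.range n, (w (k + 1) - w k) = w n - w 0 :=
      Finset.sum_range_sub (fun k => w k) n
    calc ∑ i : Fin n, c i • A i
        = ∑ i : Fin n, (fun k => w k - w (k + 1)) (i : ℕ) := Finset.sum_congr rfl fun i _ => key i
      _ = ∑ k ∈ Finset.range n, (w k - w (k + 1)) :=
          Fin.sum_univ_eq_sum_range (fun k => w k - w (k + 1)) n
      _ = -(∑ k ∈ Finset.range n, (w (k + 1) - w k)) := by
          rw [← Finset.sum_neg_distrib]; exact Finset.sum_congr rfl fun k _ => by abel
      _ = 0 := by rw [h1, hwn, hw0, sub_self, neg_zero]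
  have hli : LinearIndependent ℝ (fun i => A i) :=
    Matrix.linearIndependent_rows_iff_isUnit.mpr ((Matrix.isUnit_iff_isUnit_det A).mpr hinv)
  have hc0 : ∀ i, c i = 0 := Fintype.linearIndependent_iff.mp hli c htel
  have hS : ∀ i : Fin n, (∑ j, A i j ^ 2) ≠ 0 := by
    intro i hS0
    apply hA i
    funext j
    have := (Finset.sum_eq_zero_iff_of_nonneg (fun j _ => sq_nonneg (A i j))).mp hS0 j
      (Finset.mem_univ j)
    exact pow_eq_zero_iff (by norm_num) |>.mp this
  have hdot : ∀ i : Fin n, (∑ j, A i j * w i j) = 0 := by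
    intro i
    have h2 : (2 : ℝ) / (∑ j, A i j ^ 2) ≠ 0 := div_ne_zero two_ne_zero (hS i)
    have := hc0 i
    rw [hc] at this
    exact (mul_eq_zero.mp this).resolve_left h2
  have hwv : ∀ k, k ≤ n → w k = v := by
    intro k
    induction k with
    | zero => intro _; exact hw0
    | succ k ih =>
      intro hk
      have hkn : k < n := hk
      rw [hstep' k hkn, ih (le_of_lt hkn)]
      have : c ⟨k, hkn⟩ = 0 := hc0 _
      rw [this, zero_smul, sub_zero]
  have hAv : A.mulVec v = 0 := by
    ext i
    have := hdot i
    rw [hwv i.val (le_of_lt i.isLt)] at this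
    simpa [Matrix.mulVec, dotProduct] using this
  have hinj : Function.Injective A.mulVec :=
    Matrix.mulVec_injective_iff_isUnit.mpr ((Matrix.isUnit_iff_isUnit_det A).mpr hinv)
  have := hinj (a₁ := v) (a₂ := 0) (by rw [hAv, Matrix.mulVec_zero])
  exact this
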